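/- Let T̃_{ψ,z}(a) := Σ_{s∈S} a_s F_{s,z} be as above, a bounded linear interpolation operator of norm ≤ c² from l_{1,ψ,z}(M') to H_{1,ψ}(M') and from l_{∞,ψ,z}(M') to H_{∞,ψ}(M'). Then for every 1 < p < ∞, T̃_{ψ,z} maps l_{p,ψ^p,z}(M') continuously into H_{p,ψ^p}(M') with norm bounded by c². Consequently, T_{ψ,z} := T̃_{ψ^{1/p},z} is a bounded linear interpolation operator in B(l_{p,ψ,z}(M'), H_{p,ψ}(M')). -/

import Mathlib

/-!
Testing the `ℓ^∞` bound on unimodular combinations of point masses on the fibre over `z` shows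
that the kernel `k(s, y) = |T̃ δ_s (y)| ψ(y) / ψ(s)` has row sums `≤ c²`, and the `ℓ^1` bound on
single point masses shows that its column sums are `≤ c²`. By Hölder's inequality (the Schur
test) `T̃` is then bounded by `c²` from `l_{p,ψ^p}` to `H_{p,ψ^p}` on finitely supported data,
and the `ℓ^∞` bound passes this to the limit, because the finite truncations of
`a ∈ l_{p,ψ^p}` converge to `a` in `l_{∞,ψ}`. The weight `ψ^{1/p}` turns this into the
statement for `ψ`.
-/

open Set
open scoped Manifold Topology ENNReal NNReal Classical

noncomputable section

/-- The weighted `ℓ^p` norm of `g` on the fibre `r ⁻¹' {x}` of a covering `r : N' → N`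
(the norm of the space `l_{p,ψ,x}`). -/
def fibLpNorm {N N' : Type*} (r : N' → N) (ψ : N' → ℝ) (p : ℝ≥0∞) (x : N)
    (g : N' → ℂ) : ℝ :=
  if p = ∞ then ⨆ y : r ⁻¹' {x}, ‖g ↑y‖ * ψ ↑y
  else (∑' y : r ⁻¹' {x}, ‖g ↑y‖ ^ p.toReal * ψ ↑y) ^ (1 / p.toReal)

/-- Membership in the space `l_{p,ψ,x}` of the fibre over `x`. -/
def MemFibLp {N N' : Type*} (r : N' → N) (ψ : N' → ℝ) (p : ℝ≥0∞) (x : N)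
    (g : N' → ℂ) : Prop :=
  if p = ∞ then BddAbove (range fun y : r ⁻¹' {x} => ‖g ↑y‖ * ψ ↑y)
  else Summable fun y : r ⁻¹' {x} => ‖g ↑y‖ ^ p.toReal * ψ ↑y

/-- The norm of the space `H_{p,ψ}(M')`: the sup over `x ∈ M` of the weighted `ℓ^p`
norms over the fibres `r ⁻¹' {x}`. -/
def covHpNorm {N N' : Type*} (r : N' → N) (ψ : N' → ℝ) (p : ℝ≥0∞) (M : Set N)
    (g : N' → ℂ) : ℝ :=
  ⨆ x : M, fibLpNorm r ψ p ↑x g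

/-- Membership in the space `H_{p,ψ}(M')` : `g` is holomorphic on `M' := r ⁻¹' M`,
its restriction to every fibre lies in `l_{p,ψ,x}`, and its `H_{p,ψ}` norm is finite. -/
def MemCovHp (H : Type*) [NormedAddCommGroup H] [NormedSpace ℂ H]
    {N N' : Type*} [TopologicalSpace N] [ChartedSpace H N]
    [TopologicalSpace N'] [ChartedSpace H N']
    (r : N' → N) (ψ : N' → ℝ) (p : ℝ≥0∞) (M : Set N) (g : N' → ℂ) : Prop :=
  MDifferentiableOn 𝓘(ℂ, H) 𝓘(ℂ, ℂ) g (r ⁻¹' M) ∧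
  (∀ x ∈ M, MemFibLp r ψ p x g) ∧
  BddAbove (range fun x : M => fibLpNorm r ψ p ↑x g)

/-- A relatively compact domain `M ⊂⊂ N` with smooth boundary which is strongly
pseudoconvex: `M = {ρ < 0}` for a `C²` function `ρ` defined near `closure M` with
`dρ ≠ 0` on the boundary, whose Levi form is positive on the complex tangent space
of the boundary.  (In a chart, the Levi form applied to `w` equals
`(1/4)(Hess ρ (w,w) + Hess ρ (i•w, i•w))`, and the complex tangency of `w` means
`dρ(w) = dρ(i•w) = 0`.) -/
def IsStronglyPseudoconvexDomain (H : Type*) [NormedAddCommGroup H] [NormedSpace ℂ H]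
    {N : Type*} [TopologicalSpace N] [ChartedSpace H N] (M : Set N) : Prop :=
  IsOpen M ∧ IsConnected M ∧ IsCompact (closure M) ∧
  ∃ (Ω : Set N) (ρ : N → ℝ), IsOpen Ω ∧ closure M ⊆ Ω ∧
    M = {z ∈ Ω | ρ z < 0} ∧
    (∀ z ∈ Ω, ContDiffAt ℝ 2 (fun u => ρ ((chartAt H z).symm u)) (chartAt H z z)) ∧
    (∀ z ∈ frontier M, fderiv ℝ (fun u => ρ ((chartAt H z).symm u)) (chartAt H z z) ≠ 0) ∧
    (∀ z ∈ frontier M, ∀ w : H, w ≠ 0 →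
      fderiv ℝ (fun u => ρ ((chartAt H z).symm u)) (chartAt H z z) w = 0 →
      fderiv ℝ (fun u => ρ ((chartAt H z).symm u)) (chartAt H z z) ((Complex.I : ℂ) • w) = 0 →
      0 < fderiv ℝ (fun u => fderiv ℝ (fun v => ρ ((chartAt H z).symm v)) u w)
            (chartAt H z z) w +
          fderiv ℝ (fun u => fderiv ℝ (fun v => ρ ((chartAt H z).symm v)) u
            ((Complex.I : ℂ) • w)) (chartAt H z z) ((Complex.I : ℂ) • w))

/-- An open subset which is a Stein manifold: it is holomorphically separable and
holomorphically convex (every compact subset has compact holomorphically convex hull). -/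
def IsSteinOpen (H : Type*) [NormedAddCommGroup H] [NormedSpace ℂ H]
    {N : Type*} [TopologicalSpace N] [ChartedSpace H N] (Ω : Set N) : Prop :=
  IsOpen Ω ∧
  (∀ x ∈ Ω, ∀ y ∈ Ω, x ≠ y →
    ∃ f : N → ℂ, MDifferentiableOn 𝓘(ℂ, H) 𝓘(ℂ, ℂ) f Ω ∧ f x ≠ f y) ∧
  (∀ K : Set N, K ⊆ Ω → IsCompact K →
    IsCompact {x ∈ Ω | ∀ f : N → ℂ, MDifferentiableOn 𝓘(ℂ, H) 𝓘(ℂ, ℂ) f Ω →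
      ‖f x‖ ≤ ⨆ y : K, ‖f ↑y‖})

/-- A holomorphically convex open subset: the holomorphically convex hull (with respect
to functions holomorphic on `V`) of every compact subset of `V` is compact. -/
def IsHolomorphicallyConvexOpen (H : Type*) [NormedAddCommGroup H] [NormedSpace ℂ H]
    {N : Type*} [TopologicalSpace N] [ChartedSpace H N] (V : Set N) : Prop :=
  IsOpen V ∧
  (∀ K : Set N, K ⊆ V → IsCompact K →
    IsCompact {x ∈ V | ∀ f : N → ℂ, MDifferentiableOn 𝓘(ℂ, H) 𝓘(ℂ, ℂ) f V →
      ‖f x‖ ≤ ⨆ y : K, ‖f ↑y‖})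

/-- A compact subset which is holomorphically convex in `M`: it coincides with its
holomorphically convex hull with respect to functions holomorphic on `M`. -/
def IsHolConvexCompactIn (H : Type*) [NormedAddCommGroup H] [NormedSpace ℂ H]
    {N : Type*} [TopologicalSpace N] [ChartedSpace H N] (M K : Set N) : Prop :=
  IsCompact K ∧ K ⊆ M ∧
  {x ∈ M | ∀ f : N → ℂ, MDifferentiableOn 𝓘(ℂ, H) 𝓘(ℂ, ℂ) f M →
    ‖f x‖ ≤ ⨆ y : K, ‖f ↑y‖} ⊆ K

/-- A compact complex subvariety of `M` of complex dimension `≥ 1`: a nonempty compact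
subset of `M`, without isolated points (which for analytic sets is equivalent to having
positive dimension at each point), which is locally the common zero set of a family of
holomorphic functions. -/
def IsCompactPosDimSubvariety (H : Type*) [NormedAddCommGroup H] [NormedSpace ℂ H]
    {N : Type*} [TopologicalSpace N] [ChartedSpace H N] (M A : Set N) : Prop :=
  A.Nonempty ∧ A ⊆ M ∧ IsCompact A ∧
  (∀ x ∈ A, x ∈ closure (A \ {x})) ∧
  (∀ x ∈ A, ∃ U : Set N, IsOpen U ∧ x ∈ U ∧
    ∃ F : Set (N → ℂ), (∀ f ∈ F, MDifferentiableOn 𝓘(ℂ, H) 𝓘(ℂ, ℂ) f U) ∧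
      A ∩ U = {y ∈ U | ∀ f ∈ F, f y = 0})

/-- `C_M`: the union of all compact complex subvarieties of `M` of complex
dimension `≥ 1`. -/
def varietyUnion (H : Type*) [NormedAddCommGroup H] [NormedSpace ℂ H]
    {N : Type*} [TopologicalSpace N] [ChartedSpace H N] (M : Set N) : Set N :=
  ⋃₀ {A : Set N | IsCompactPosDimSubvariety H M A}

/-- The inclusion `M ↪ N` induces an isomorphism of fundamental groups
(`π₁(M) = π₁(N)`): every loop in `N` based at a point of `M` is homotopic to a loop in
`M`, and loops in `M` which are homotopic in `N` are homotopic in `M`. -/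
def InducesPi1Iso {N : Type*} [TopologicalSpace N] (M : Set N) : Prop :=
  ∀ x₀ : M,
    (∀ γ : Path (x₀ : N) (x₀ : N),
      ∃ δ : Path x₀ x₀, Path.Homotopic γ (δ.map continuous_subtype_val)) ∧
    (∀ δ δ' : Path x₀ x₀,
      Path.Homotopic (δ.map continuous_subtype_val) (δ'.map continuous_subtype_val) →
      Path.Homotopic δ δ')

/-- A closed complex submanifold `Y` of an open set `V`: `Y ⊆ V` is closed in `V` and
is locally the zero set of a holomorphic submersion into some `ℂ^k`. -/
def IsClosedComplexSubmanifoldIn (H : Type*) [NormedAddCommGroup H] [NormedSpace ℂ H]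
    {N : Type*} [TopologicalSpace N] [ChartedSpace H N] (V Y : Set N) : Prop :=
  Y ⊆ V ∧ closure Y ∩ V ⊆ Y ∧
  ∀ y ∈ Y, ∃ (k : ℕ) (U : Set N) (f : N → (Fin k → ℂ)),
    IsOpen U ∧ y ∈ U ∧ U ⊆ V ∧
    MDifferentiableOn 𝓘(ℂ, H) 𝓘(ℂ, Fin k → ℂ) f U ∧
    Y ∩ U = {x ∈ U | f x = 0} ∧
    ∀ x ∈ Y ∩ U, Function.Surjective (mfderiv 𝓘(ℂ, H) 𝓘(ℂ, Fin k → ℂ) f x)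

open Filter

lemma Real.rpow_sum_mul_le_weight_mul_sum {ι : Type*} (s : Finset ι) {p : ℝ} (hp : 1 ≤ p)
    {w f : ι → ℝ} (hw : ∀ i, 0 ≤ w i) (hf : ∀ i, 0 ≤ f i) :
    (∑ i ∈ s, w i * f i) ^ p ≤ (∑ i ∈ s, w i) ^ (p - 1) * ∑ i ∈ s, w i * f i ^ p := by
  have hW : 0 ≤ ∑ i ∈ s, w i := Finset.sum_nonneg fun i _ => hw i
  have hV : 0 ≤ ∑ i ∈ s, w i * f i ^ p :=
    Finset.sum_nonneg fun i _ => mul_nonneg (hw i) (Real.rpow_nonneg (hf i) p)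
  have hp0 : p ≠ 0 := by positivity
  calc (∑ i ∈ s, w i * f i) ^ p
      ≤ ((∑ i ∈ s, w i) ^ (1 - p⁻¹) * (∑ i ∈ s, w i * f i ^ p) ^ p⁻¹) ^ p :=
        Real.rpow_le_rpow (Finset.sum_nonneg fun i _ => mul_nonneg (hw i) (hf i))
          (Real.inner_le_weight_mul_Lp_of_nonneg s hp w f hw hf) (by positivity)
    _ = (∑ i ∈ s, w i) ^ (p - 1) * ∑ i ∈ s, w i * f i ^ p := by
        rw [Real.mul_rpow (by positivity) (by positivity), ← Real.rpow_mul hW,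
          Real.rpow_inv_rpow hV hp0, sub_mul, inv_mul_cancel₀ hp0, one_mul]

/-- The Schur test for nonnegative matrices, in `ℓ^p`. -/
theorem Finset.sum_rpow_sum_mul_le_of_row_col {ι κ : Type*} (F : Finset ι) (G : Finset κ)
    {k : ι → κ → ℝ} (hk : ∀ i j, 0 ≤ k i j) {C : ℝ} (hC : 0 ≤ C)
    (hrow : ∀ j ∈ G, ∑ i ∈ F, k i j ≤ C) (hcol : ∀ i ∈ F, ∑ j ∈ G, k i j ≤ C)
    {f : ι → ℝ} (hf : ∀ i, 0 ≤ f i) {p : ℝ} (hp : 1 ≤ p) :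
    ∑ j ∈ G, (∑ i ∈ F, k i j * f i) ^ p ≤ C ^ p * ∑ i ∈ F, f i ^ p := by
  have hfp : ∀ i, 0 ≤ f i ^ p := fun i => Real.rpow_nonneg (hf i) p
  calc ∑ j ∈ G, (∑ i ∈ F, k i j * f i) ^ p
      ≤ ∑ j ∈ G, C ^ (p - 1) * ∑ i ∈ F, k i j * f i ^ p := by
        refine Finset.sum_le_sum fun j hj =>
          (Real.rpow_sum_mul_le_weight_mul_sum F hp (fun i => hk i j) hf).trans ?_
        exact mul_le_mul_of_nonneg_right
          (Real.rpow_le_rpow (Finset.sum_nonneg fun i _ => hk i j) (hrow j hj) (by linarith))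
          (Finset.sum_nonneg fun i _ => mul_nonneg (hk i j) (hfp i))
    _ = C ^ (p - 1) * ∑ i ∈ F, f i ^ p * ∑ j ∈ G, k i j := by
        rw [← Finset.mul_sum, Finset.sum_comm]
        simp_rw [Finset.mul_sum, mul_comm (f _ ^ p)]
    _ ≤ C ^ (p - 1) * ∑ i ∈ F, f i ^ p * C := by
        gcongr with i hi
        · exact hfp i
        · exact hcol i hi
    _ = C ^ p * ∑ i ∈ F, f i ^ p := by
        rw [← Finset.sum_mul, mul_comm _ C, ← mul_assoc, ← Real.rpow_add_one' hC (by linarith),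
          sub_add_cancel]

lemma Real.le_rpow_tsum_rpow {ι : Type*} {f : ι → ℝ} (hf : ∀ i, 0 ≤ f i) {q : ℝ} (hq : 0 < q)
    (h : Summable fun i => f i ^ q) (i : ι) : f i ≤ (∑' j, f j ^ q) ^ q⁻¹ := by
  calc f i = (f i ^ q) ^ q⁻¹ := (Real.rpow_rpow_inv (hf i) hq.ne').symm
    _ ≤ (∑' j, f j ^ q) ^ q⁻¹ :=
      Real.rpow_le_rpow (Real.rpow_nonneg (hf i) q)
        (h.le_tsum i fun j _ => Real.rpow_nonneg (hf j) q) (inv_nonneg.mpr hq.le)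

lemma Real.tendsto_rpow_tsum_compl_atTop_zero {ι : Type*} (f : ι → ℝ) {q : ℝ} (hq : 0 < q) :
    Tendsto (fun F : Finset ι => (∑' j : {j // j ∉ F}, f j ^ q) ^ q⁻¹) atTop (𝓝 0) := by
  simpa [Real.zero_rpow (inv_ne_zero hq.ne')] using
    (tendsto_tsum_compl_atTop_zero fun j => f j ^ q).rpow_const (Or.inr (inv_nonneg.mpr hq.le))

section Truncation

variable {X : Type*} {Z : Set X}

def truncate (a : X → ℂ) (F : Finset Z) : X → ℂ :=
  ∑ s ∈ F, a s • Pi.single (s : X) 1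

lemma truncate_apply_coe (a : X → ℂ) (F : Finset Z) (t : Z) :
    truncate a F t = if t ∈ F then a t else 0 := by
  simp only [truncate, Finset.sum_apply, Pi.smul_apply, Pi.single_apply, Subtype.coe_inj,
    smul_eq_mul, mul_ite, mul_one, mul_zero, Finset.sum_ite_eq]

lemma map_truncate_apply (T : (X → ℂ) →ₗ[ℂ] (X → ℂ)) (a : X → ℂ) (F : Finset Z) (y : X) :
    T (truncate a F) y = ∑ s ∈ F, a s * T (Pi.single (s : X) 1) y := by
  simp [truncate, map_sum, map_smul]

end Truncation

section KernelBounds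

variable {X : Type*} {Z Y : Set X} {w : X → ℝ} (T : (X → ℂ) →ₗ[ℂ] (X → ℂ)) {C : ℝ}

lemma sum_norm_map_single_div_le (hw : ∀ x, 0 < w x)
    (hinf : ∀ (g : X → ℂ) (b : ℝ), 0 ≤ b → (∀ t ∈ Z, ‖g t‖ * w t ≤ b) →
      ∀ y ∈ Y, ‖T g y‖ * w y ≤ C * b)
    {y : X} (hy : y ∈ Y) (F : Finset Z) :
    ∑ s ∈ F, ‖T (Pi.single (s : X) 1) y‖ / w s ≤ C / w y := by
  choose u hu_norm hu using fun s : X => Complex.exists_norm_eq_mul_self (T (Pi.single s 1) y)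
  have hg : ∀ t ∈ Z, ‖truncate (fun s => u s / w s) F t‖ * w t ≤ 1 := by
    intro t ht
    rw [show t = ((⟨t, ht⟩ : Z) : X) from rfl, truncate_apply_coe]
    split_ifs
    · rw [norm_div, hu_norm, Complex.norm_real, Real.norm_of_nonneg (hw t).le,
        one_div_mul_cancel (hw t).ne']
    · simp
  have hTg : T (truncate (fun s => u s / w s) F) y =
      ((∑ s ∈ F, ‖T (Pi.single (s : X) 1) y‖ / w s : ℝ) : ℂ) := by
    rw [map_truncate_apply]
    push_cast
    exact Finset.sum_congr rfl fun s _ => by rw [hu, div_mul_eq_mul_div]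
  have h := hinf _ 1 zero_le_one hg y hy
  rw [hTg, Complex.norm_real, Real.norm_of_nonneg (Finset.sum_nonneg fun (s : Z) _ =>
    div_nonneg (norm_nonneg _) (hw s).le), mul_one] at h
  exact (le_div_iff₀ (hw y)).mpr h

/-- With `k s y = ‖T δ_s y‖ w y / w s`, the two endpoint bounds are the row and column bounds
of the Schur test for the matrix `k`. -/
lemma sum_rpow_norm_map_truncate_le (hw : ∀ x, 0 < w x)
    (hinf : ∀ (g : X → ℂ) (b : ℝ), 0 ≤ b → (∀ t ∈ Z, ‖g t‖ * w t ≤ b) →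
      ∀ y ∈ Y, ‖T g y‖ * w y ≤ C * b)
    (hcol : ∀ s ∈ Z, ∀ G : Finset Y, ∑ y ∈ G, ‖T (Pi.single s 1) y‖ * w y ≤ C * w s)
    (hC : 0 ≤ C) {q : ℝ} (hq : 1 ≤ q) (a : X → ℂ) (F : Finset Z) (G : Finset Y) :
    ∑ y ∈ G, (‖T (truncate a F) y‖ * w y) ^ q ≤ C ^ q * ∑ s ∈ F, (‖a s‖ * w s) ^ q := by
  set k : Z → Y → ℝ := fun s y => ‖T (Pi.single (s : X) 1) y‖ * w y / w s
  have hk : ∀ s y, 0 ≤ k s y := fun s y =>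
    div_nonneg (mul_nonneg (norm_nonneg _) (hw y).le) (hw s).le
  have hpoint : ∀ y : Y, ‖T (truncate a F) y‖ * w y ≤ ∑ s ∈ F, k s y * (‖a s‖ * w s) := by
    intro y
    rw [map_truncate_apply]
    refine (mul_le_mul_of_nonneg_right (norm_sum_le _ _) (hw y).le).trans_eq ?_
    rw [Finset.sum_mul]
    refine Finset.sum_congr rfl fun s _ => ?_
    have := (hw s).ne'
    simp only [k, norm_mul]
    field_simp
  have hrow : ∀ y ∈ G, ∑ s ∈ F, k s y ≤ C := by
    intro y _
    have h := sum_norm_map_single_div_le T hw hinf y.2 F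
    simp only [k, mul_div_right_comm, ← Finset.sum_mul]
    rwa [le_div_iff₀ (hw y)] at h
  have hcol' : ∀ s ∈ F, ∑ y ∈ G, k s y ≤ C := by
    intro s _
    simp only [k, ← Finset.sum_div]
    exact (div_le_iff₀ (hw s)).mpr (hcol s s.2 G)
  calc ∑ y ∈ G, (‖T (truncate a F) y‖ * w y) ^ q
      ≤ ∑ y ∈ G, (∑ s ∈ F, k s y * (‖a s‖ * w s)) ^ q :=
        Finset.sum_le_sum fun y _ => Real.rpow_le_rpow
          (mul_nonneg (norm_nonneg _) (hw y).le) (hpoint y) (by linarith)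
    _ ≤ C ^ q * ∑ s ∈ F, (‖a s‖ * w s) ^ q :=
        Finset.sum_rpow_sum_mul_le_of_row_col F G hk hC hrow hcol'
          (fun s => mul_nonneg (norm_nonneg _) (hw s).le) hq

lemma tendsto_map_truncate_apply (hw : ∀ x, 0 < w x)
    (hinf : ∀ (g : X → ℂ) (b : ℝ), 0 ≤ b → (∀ t ∈ Z, ‖g t‖ * w t ≤ b) →
      ∀ y ∈ Y, ‖T g y‖ * w y ≤ C * b)
    {q : ℝ} (hq : 0 < q) {a : X → ℂ} (ha : Summable fun t : Z => (‖a t‖ * w t) ^ q)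
    {y : X} (hy : y ∈ Y) :
    Tendsto (fun F : Finset Z => T (truncate a F) y) atTop (𝓝 (T a y)) := by
  set b : Finset Z → ℝ := fun F => (∑' t : {t // t ∉ F}, (‖a t‖ * w t) ^ q) ^ q⁻¹
  have hb : ∀ F, 0 ≤ b F := fun F => Real.rpow_nonneg
    (tsum_nonneg fun t => Real.rpow_nonneg (mul_nonneg (norm_nonneg _) (hw _).le) q) _
  have htail : ∀ F, ∀ t ∈ Z, ‖(a - truncate a F) t‖ * w t ≤ b F := by
    intro F t ht
    rw [Pi.sub_apply, show t = ((⟨t, ht⟩ : Z) : X) from rfl, truncate_apply_coe]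
    split_ifs with htF
    · simpa using hb F
    · rw [sub_zero]
      exact Real.le_rpow_tsum_rpow (f := fun t : {t // t ∉ F} => ‖a t‖ * w t)
        (fun t => mul_nonneg (norm_nonneg _) (hw _).le) hq
        (ha.comp_injective Subtype.coe_injective) ⟨⟨t, ht⟩, htF⟩
  have hdist : ∀ F, ‖T (truncate a F) y - T a y‖ ≤ C * b F / w y := by
    intro F
    rw [norm_sub_rev, ← Pi.sub_apply, ← map_sub, le_div_iff₀ (hw y)]
    exact hinf _ _ (hb F) (htail F) y hy
  rw [tendsto_iff_norm_sub_tendsto_zero]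
  refine squeeze_zero (fun F => norm_nonneg _) hdist ?_
  have h := ((Real.tendsto_rpow_tsum_compl_atTop_zero
    (fun t : Z => ‖a t‖ * w t) hq).const_mul C).div_const (w y)
  rwa [mul_zero, zero_div] at h

theorem summable_and_tsum_rpow_norm_map_le (hw : ∀ x, 0 < w x)
    (hinf : ∀ (g : X → ℂ) (b : ℝ), 0 ≤ b → (∀ t ∈ Z, ‖g t‖ * w t ≤ b) →
      ∀ y ∈ Y, ‖T g y‖ * w y ≤ C * b)
    (hcol : ∀ s ∈ Z, ∀ G : Finset Y, ∑ y ∈ G, ‖T (Pi.single s 1) y‖ * w y ≤ C * w s)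
    (hC : 0 ≤ C) {q : ℝ} (hq : 1 ≤ q) {a : X → ℂ}
    (ha : Summable fun t : Z => (‖a t‖ * w t) ^ q) :
    Summable (fun y : Y => (‖T a y‖ * w y) ^ q) ∧
      ∑' y : Y, (‖T a y‖ * w y) ^ q ≤ C ^ q * ∑' t : Z, (‖a t‖ * w t) ^ q := by
  have hnn : ∀ x : X, 0 ≤ (‖(T a) x‖ * w x) ^ q := fun x =>
    Real.rpow_nonneg (mul_nonneg (norm_nonneg _) (hw x).le) q
  have hfin : ∀ G : Finset Y, ∑ y ∈ G, (‖T a y‖ * w y) ^ q ≤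
      C ^ q * ∑' t : Z, (‖a t‖ * w t) ^ q := by
    intro G
    refine le_of_tendsto' (tendsto_finsetSum G fun y _ =>
      (((tendsto_map_truncate_apply T hw hinf (by linarith) ha y.2).norm.mul_const _).rpow_const
        (Or.inr (by linarith)))) fun F => ?_
    refine (sum_rpow_norm_map_truncate_le T hw hinf hcol hC hq a F G).trans ?_
    exact mul_le_mul_of_nonneg_left (ha.sum_le_tsum F fun t _ =>
      Real.rpow_nonneg (mul_nonneg (norm_nonneg _) (hw t).le) q) (Real.rpow_nonneg hC q)
  exact ⟨summable_of_sum_le (fun y => hnn y) hfin, Real.tsum_le_of_sum_le (fun y => hnn y) hfin⟩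

end KernelBounds

section FibreNorms

variable {N N' : Type*} {r : N' → N} {ψ : N' → ℝ} {x : N} {g : N' → ℂ}

lemma memFibLp_rpow_weight_iff (hψ : ∀ y, 0 ≤ ψ y) {p : ℝ≥0∞} (hp : p ≠ ∞) :
    MemFibLp r (fun y => ψ y ^ p.toReal) p x g ↔
      Summable fun y : r ⁻¹' {x} => (‖g y‖ * ψ y) ^ p.toReal := by
  simp only [MemFibLp, if_neg hp, Real.mul_rpow (norm_nonneg _) (hψ _)]

lemma fibLpNorm_rpow_weight (hψ : ∀ y, 0 ≤ ψ y) {p : ℝ≥0∞} (hp : p ≠ ∞) :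
    fibLpNorm r (fun y => ψ y ^ p.toReal) p x g =
      (∑' y : r ⁻¹' {x}, (‖g y‖ * ψ y) ^ p.toReal) ^ (1 / p.toReal) := by
  simp only [fibLpNorm, if_neg hp, Real.mul_rpow (norm_nonneg _) (hψ _)]

lemma memFibLp_one_iff :
    MemFibLp r ψ 1 x g ↔ Summable fun y : r ⁻¹' {x} => ‖g y‖ * ψ y := by
  simp [MemFibLp]

lemma fibLpNorm_one : fibLpNorm r ψ 1 x g = ∑' y : r ⁻¹' {x}, ‖g y‖ * ψ y := by
  simp [fibLpNorm]

lemma memFibLp_one_single (s : N') : MemFibLp r ψ 1 x (Pi.single s 1) := by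
  rw [memFibLp_one_iff]
  refine summable_of_hasFiniteSupport ((Set.finite_singleton s).preimage
    Subtype.coe_injective.injOn |>.subset fun t ht => ?_)
  by_contra hts
  simp_all [Pi.single_apply]

lemma fibLpNorm_one_single {s : N'} (hs : s ∈ r ⁻¹' {x}) :
    fibLpNorm r ψ 1 x (Pi.single s 1) = ψ s := by
  rw [fibLpNorm_one, tsum_eq_single ⟨s, hs⟩ fun t hts => ?_]
  · simp
  · simp [Subtype.coe_ne_coe.mpr hts]

lemma memFibLp_top_of_le {b : ℝ} (h : ∀ y ∈ r ⁻¹' {x}, ‖g y‖ * ψ y ≤ b) :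
    MemFibLp r ψ ∞ x g := by
  simp only [MemFibLp, if_pos]
  exact ⟨b, Set.forall_mem_range.mpr fun y => h y y.2⟩

lemma fibLpNorm_top_le {b : ℝ} (hb : 0 ≤ b) (h : ∀ y ∈ r ⁻¹' {x}, ‖g y‖ * ψ y ≤ b) :
    fibLpNorm r ψ ∞ x g ≤ b := by
  simp only [fibLpNorm, if_pos]
  exact Real.iSup_le (fun y => h y y.2) hb

lemma norm_mul_le_fibLpNorm_top (hg : MemFibLp r ψ ∞ x g) {y : N'} (hy : y ∈ r ⁻¹' {x}) :
    ‖g y‖ * ψ y ≤ fibLpNorm r ψ ∞ x g := by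
  simp only [MemFibLp, fibLpNorm, if_pos] at hg ⊢
  exact le_ciSup hg ⟨y, hy⟩

lemma fibLpNorm_le_covHpNorm {p : ℝ≥0∞} {M : Set N}
    (hg : BddAbove (Set.range fun x : M => fibLpNorm r ψ p x g)) (hx : x ∈ M) :
    fibLpNorm r ψ p x g ≤ covHpNorm r ψ p M g :=
  le_ciSup hg ⟨x, hx⟩

end FibreNorms

section Endpoints

variable {H : Type*} [NormedAddCommGroup H] [NormedSpace ℂ H]
  {N N' : Type*} [TopologicalSpace N] [ChartedSpace H N] [TopologicalSpace N'] [ChartedSpace H N']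
  {r : N' → N} {ψ : N' → ℝ} {M : Set N} {z x : N} {C : ℝ}

lemma norm_apply_mul_le_of_bound_top {T : (N' → ℂ) → (N' → ℂ)} (hC : 0 ≤ C)
    (hT : ∀ a, MemFibLp r ψ ∞ z a →
      MemCovHp H r ψ ∞ M (T a) ∧ covHpNorm r ψ ∞ M (T a) ≤ C * fibLpNorm r ψ ∞ z a)
    (hx : x ∈ M) (g : N' → ℂ) (b : ℝ) (hb : 0 ≤ b) (hg : ∀ t ∈ r ⁻¹' {z}, ‖g t‖ * ψ t ≤ b)
    (y : N') (hy : y ∈ r ⁻¹' {x}) : ‖T g y‖ * ψ y ≤ C * b := by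
  obtain ⟨⟨-, hmem, hbdd⟩, hnorm⟩ := hT g (memFibLp_top_of_le hg)
  calc ‖T g y‖ * ψ y ≤ fibLpNorm r ψ ∞ x (T g) := norm_mul_le_fibLpNorm_top (hmem x hx) hy
    _ ≤ covHpNorm r ψ ∞ M (T g) := fibLpNorm_le_covHpNorm hbdd hx
    _ ≤ C * fibLpNorm r ψ ∞ z g := hnorm
    _ ≤ C * b := mul_le_mul_of_nonneg_left (fibLpNorm_top_le hb hg) hC

lemma sum_norm_apply_single_mul_le_of_bound_one {T : (N' → ℂ) → (N' → ℂ)}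
    (hψ : ∀ y, 0 ≤ ψ y)
    (hT : ∀ a, MemFibLp r ψ 1 z a →
      MemCovHp H r ψ 1 M (T a) ∧ covHpNorm r ψ 1 M (T a) ≤ C * fibLpNorm r ψ 1 z a)
    (hx : x ∈ M) {s : N'} (hs : s ∈ r ⁻¹' {z}) (G : Finset (r ⁻¹' {x})) :
    ∑ y ∈ G, ‖T (Pi.single s 1) y‖ * ψ y ≤ C * ψ s := by
  obtain ⟨⟨-, hmem, hbdd⟩, hnorm⟩ := hT _ (memFibLp_one_single s)
  calc ∑ y ∈ G, ‖T (Pi.single s 1) y‖ * ψ y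
      ≤ fibLpNorm r ψ 1 x (T (Pi.single s 1)) := by
        rw [fibLpNorm_one]
        exact (memFibLp_one_iff.mp (hmem x hx)).sum_le_tsum G fun y _ =>
          mul_nonneg (norm_nonneg _) (hψ y)
    _ ≤ covHpNorm r ψ 1 M (T (Pi.single s 1)) := fibLpNorm_le_covHpNorm hbdd hx
    _ ≤ C * ψ s := by rwa [← fibLpNorm_one_single (ψ := ψ) hs]

theorem memCovHp_rpow_weight_of_endpoints (T : (N' → ℂ) →ₗ[ℂ] (N' → ℂ))
    (hψ : ∀ y, 0 < ψ y) (c : ℝ)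
    (hT1 : ∀ a : N' → ℂ, MemFibLp r ψ 1 z a →
      MemCovHp H r ψ 1 M (T a) ∧
      covHpNorm r ψ 1 M (T a) ≤ c ^ 2 * fibLpNorm r ψ 1 z a ∧
      ∀ x ∈ r ⁻¹' {z}, T a x = a x)
    (hTinf : ∀ a : N' → ℂ, MemFibLp r ψ ∞ z a →
      MemCovHp H r ψ ∞ M (T a) ∧
      covHpNorm r ψ ∞ M (T a) ≤ c ^ 2 * fibLpNorm r ψ ∞ z a ∧
      ∀ x ∈ r ⁻¹' {z}, T a x = a x)
    {p : ℝ≥0∞} (hp1 : 1 < p) (hpt : p ≠ ∞) {a : N' → ℂ}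
    (ha : MemFibLp r (fun y => ψ y ^ p.toReal) p z a) :
    MemCovHp H r (fun y => ψ y ^ p.toReal) p M (T a) ∧
      covHpNorm r (fun y => ψ y ^ p.toReal) p M (T a) ≤
        c ^ 2 * fibLpNorm r (fun y => ψ y ^ p.toReal) p z a ∧
      ∀ x ∈ r ⁻¹' {z}, T a x = a x := by
  have hψ0 : ∀ y, 0 ≤ ψ y := fun y => (hψ y).le
  set q := p.toReal
  have hq : 1 < q := by simpa using ENNReal.toReal_strict_mono hpt hp1
  have hq0 : 0 < q := by linarith
  have haq := (memFibLp_rpow_weight_iff hψ0 hpt).mp ha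
  set S := ∑' t : r ⁻¹' {z}, (‖a t‖ * ψ t) ^ q
  have hS : 0 ≤ S := tsum_nonneg fun t => Real.rpow_nonneg (mul_nonneg (norm_nonneg _) (hψ0 t)) q
  have hainf : MemFibLp r ψ ∞ z a := memFibLp_top_of_le fun t ht =>
    Real.le_rpow_tsum_rpow (fun t : r ⁻¹' {z} => mul_nonneg (norm_nonneg (a t)) (hψ0 t))
      hq0 haq ⟨t, ht⟩
  obtain ⟨⟨hholo, -, -⟩, -, hinterp⟩ := hTinf a hainf
  have hfibre : ∀ x ∈ M, Summable (fun y : r ⁻¹' {x} => (‖T a y‖ * ψ y) ^ q) ∧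
      ∑' y : r ⁻¹' {x}, (‖T a y‖ * ψ y) ^ q ≤ (c ^ 2) ^ q * S := fun x hx =>
    summable_and_tsum_rpow_norm_map_le T hψ
      (norm_apply_mul_le_of_bound_top (sq_nonneg c)
        (fun g hg => (hTinf g hg).imp_right And.left) hx)
      (fun s hs => sum_norm_apply_single_mul_le_of_bound_one hψ0
        (fun g hg => (hT1 g hg).imp_right And.left) hx hs)
      (sq_nonneg c) hq.le haq
  have hnorm : ∀ x ∈ M, fibLpNorm r (fun y => ψ y ^ q) p x (T a) ≤ c ^ 2 * S ^ (1 / q) := by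
    intro x hx
    rw [fibLpNorm_rpow_weight hψ0 hpt]
    calc (∑' y : r ⁻¹' {x}, (‖T a y‖ * ψ y) ^ q) ^ (1 / q)
        ≤ ((c ^ 2) ^ q * S) ^ (1 / q) :=
          Real.rpow_le_rpow (tsum_nonneg fun y => Real.rpow_nonneg
            (mul_nonneg (norm_nonneg _) (hψ0 y)) q) (hfibre x hx).2 (by positivity)
      _ = c ^ 2 * S ^ (1 / q) := by
          rw [Real.mul_rpow (by positivity) hS, one_div, Real.rpow_rpow_inv (sq_nonneg c) hq0.ne']
  refine ⟨⟨hholo, fun x hx => (memFibLp_rpow_weight_iff hψ0 hpt).mpr (hfibre x hx).1,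
    ⟨_, Set.forall_mem_range.mpr fun x => hnorm x x.2⟩⟩, ?_, hinterp⟩
  rw [fibLpNorm_rpow_weight hψ0 hpt]
  exact Real.iSup_le (fun x => hnorm x x.2) (by positivity)

end Endpoints

theorem riesz_interpolation_step_general
    (n : ℕ)
    {N : Type*} [TopologicalSpace N] [ChartedSpace (Fin n → ℂ) N]
    {N' : Type*} [MetricSpace N'] [ChartedSpace (Fin n → ℂ) N']
    (r : N' → N)
    (M : Set N)
    (ψ : N' → ℝ) (hψpos : ∀ y, 0 < ψ y)
    (z : N)
    (c : ℝ)
    -- `T̃` is linear ...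
    (Tt : (N' → ℂ) → (N' → ℂ))
    (hTtadd : ∀ h₁ h₂ : N' → ℂ, Tt (h₁ + h₂) = Tt h₁ + Tt h₂)
    (hTtsmul : ∀ (a : ℂ) (h : N' → ℂ), Tt (a • h) = a • Tt h)
    -- ... and is a bounded interpolation operator of norm `≤ c²` at the endpoint `p = 1` ...
    (hTt1 : ∀ a : N' → ℂ, MemFibLp r ψ 1 z a →
      MemCovHp (Fin n → ℂ) r ψ 1 M (Tt a) ∧
      covHpNorm r ψ 1 M (Tt a) ≤ c ^ 2 * fibLpNorm r ψ 1 z a ∧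
      ∀ x ∈ r ⁻¹' {z}, Tt a x = a x)
    -- ... and at the endpoint `p = ∞`
    (hTtinf : ∀ a : N' → ℂ, MemFibLp r ψ ∞ z a →
      MemCovHp (Fin n → ℂ) r ψ ∞ M (Tt a) ∧
      covHpNorm r ψ ∞ M (Tt a) ≤ c ^ 2 * fibLpNorm r ψ ∞ z a ∧
      ∀ x ∈ r ⁻¹' {z}, Tt a x = a x) :
    ∀ p : ℝ≥0∞, 1 < p → p ≠ ∞ →
      -- `T̃_{ψ,z} : l_{p,ψ^p,z}(M') → H_{p,ψ^p}(M')` has norm at most `c²`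
      (∀ a : N' → ℂ, MemFibLp r (fun y => ψ y ^ p.toReal) p z a →
        MemCovHp (Fin n → ℂ) r (fun y => ψ y ^ p.toReal) p M (Tt a) ∧
        covHpNorm r (fun y => ψ y ^ p.toReal) p M (Tt a) ≤
          c ^ 2 * fibLpNorm r (fun y => ψ y ^ p.toReal) p z a ∧
        ∀ x ∈ r ⁻¹' {z}, Tt a x = a x) ∧
      -- consequently, any such operator `T̃_{ψ^{1/p},z}` built from the weight
      -- `ψ^{1/p}` is a bounded linear interpolation operator in
      -- `B(l_{p,ψ,z}(M'), H_{p,ψ}(M'))`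
      (∀ Tt' : (N' → ℂ) → (N' → ℂ),
        (∀ h₁ h₂ : N' → ℂ, Tt' (h₁ + h₂) = Tt' h₁ + Tt' h₂) →
        (∀ (a : ℂ) (h : N' → ℂ), Tt' (a • h) = a • Tt' h) →
        (∀ a : N' → ℂ, MemFibLp r (fun y => ψ y ^ (1 / p.toReal)) 1 z a →
          MemCovHp (Fin n → ℂ) r (fun y => ψ y ^ (1 / p.toReal)) 1 M (Tt' a) ∧
          covHpNorm r (fun y => ψ y ^ (1 / p.toReal)) 1 M (Tt' a) ≤
            c ^ 2 * fibLpNorm r (fun y => ψ y ^ (1 / p.toReal)) 1 z a ∧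
          ∀ x ∈ r ⁻¹' {z}, Tt' a x = a x) →
        (∀ a : N' → ℂ, MemFibLp r (fun y => ψ y ^ (1 / p.toReal)) ∞ z a →
          MemCovHp (Fin n → ℂ) r (fun y => ψ y ^ (1 / p.toReal)) ∞ M (Tt' a) ∧
          covHpNorm r (fun y => ψ y ^ (1 / p.toReal)) ∞ M (Tt' a) ≤
            c ^ 2 * fibLpNorm r (fun y => ψ y ^ (1 / p.toReal)) ∞ z a ∧
          ∀ x ∈ r ⁻¹' {z}, Tt' a x = a x) →
        ∀ a : N' → ℂ, MemFibLp r ψ p z a →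
          MemCovHp (Fin n → ℂ) r ψ p M (Tt' a) ∧
          covHpNorm r ψ p M (Tt' a) ≤ c ^ 2 * fibLpNorm r ψ p z a ∧
          ∀ x ∈ r ⁻¹' {z}, Tt' a x = a x) := by
  intro p hp1 hpt
  refine ⟨fun a ha => memCovHp_rpow_weight_of_endpoints
    { toFun := Tt, map_add' := hTtadd, map_smul' := hTtsmul } hψpos c hTt1 hTtinf hp1 hpt ha, ?_⟩
  intro Tt' hTt'add hTt'smul hTt'1 hTt'inf a ha
  have hp0 : p.toReal ≠ 0 := (ENNReal.toReal_pos (zero_lt_one.trans hp1).ne' hpt).ne'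
  have hroot : (fun y => (ψ y ^ (1 / p.toReal)) ^ p.toReal) = ψ := funext fun y => by
    rw [← Real.rpow_mul (hψpos y).le, one_div_mul_cancel hp0, Real.rpow_one]
  simpa only [hroot, LinearMap.coe_mk, AddHom.coe_mk] using memCovHp_rpow_weight_of_endpoints
    { toFun := Tt', map_add' := hTt'add, map_smul' := hTt'smul }
    (fun y => Real.rpow_pos_of_pos (hψpos y) _) c hTt'1 hTt'inf hp1 hpt (by rwa [hroot])

/-- **The Riesz interpolation step.** Fix `z ∈ M \ C_M` and let
`T̃_{ψ,z}(a) = Σ_s a_s F_{s,z}` be a linear operator which is a bounded interpolation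
operator of norm `≤ c²` both from `l_{1,ψ,z}(M')` to `H_{1,ψ}(M')` and from
`l_{∞,ψ,z}(M')` to `H_{∞,ψ}(M')`.  Then for every `1 < p < ∞` the operator `T̃_{ψ,z}`
maps `l_{p,ψ^p,z}(M')` continuously into `H_{p,ψ^p}(M')` with norm bounded by `c²`
(and it interpolates on the fibre).  Consequently, `T_{ψ,z} := T̃_{ψ^{1/p},z}` is a
bounded linear interpolation operator in `B(l_{p,ψ,z}(M'), H_{p,ψ}(M'))`. -/
theorem riesz_interpolation_step
    (n : ℕ)
    {N : Type*} [TopologicalSpace N] [ChartedSpace (Fin n → ℂ) N]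
    {N' : Type*} [MetricSpace N'] [ChartedSpace (Fin n → ℂ) N']
    (r : N' → N) (hr : IsCoveringMap r)
    (hrholo : MDifferentiable 𝓘(ℂ, Fin n → ℂ) 𝓘(ℂ, Fin n → ℂ) r)
    (M : Set N) (hM : IsStronglyPseudoconvexDomain (Fin n → ℂ) M)
    (ψ : N' → ℝ) (hψpos : ∀ y, 0 < ψ y)
    (hψuc : UniformContinuous fun y => Real.log (ψ y))
    (z : N) (hz : z ∈ M \ varietyUnion (Fin n → ℂ) M)
    (c : ℝ) (hc : 0 ≤ c)
    -- `T̃` is linear ...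
    (Tt : (N' → ℂ) → (N' → ℂ))
    (hTtadd : ∀ h₁ h₂ : N' → ℂ, Tt (h₁ + h₂) = Tt h₁ + Tt h₂)
    (hTtsmul : ∀ (a : ℂ) (h : N' → ℂ), Tt (a • h) = a • Tt h)
    -- ... and is a bounded interpolation operator of norm `≤ c²` at the endpoint `p = 1` ...
    (hTt1 : ∀ a : N' → ℂ, MemFibLp r ψ 1 z a →
      MemCovHp (Fin n → ℂ) r ψ 1 M (Tt a) ∧
      covHpNorm r ψ 1 M (Tt a) ≤ c ^ 2 * fibLpNorm r ψ 1 z a ∧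
      ∀ x ∈ r ⁻¹' {z}, Tt a x = a x)
    -- ... and at the endpoint `p = ∞`
    (hTtinf : ∀ a : N' → ℂ, MemFibLp r ψ ∞ z a →
      MemCovHp (Fin n → ℂ) r ψ ∞ M (Tt a) ∧
      covHpNorm r ψ ∞ M (Tt a) ≤ c ^ 2 * fibLpNorm r ψ ∞ z a ∧
      ∀ x ∈ r ⁻¹' {z}, Tt a x = a x) :
    ∀ p : ℝ≥0∞, 1 < p → p ≠ ∞ →
      -- `T̃_{ψ,z} : l_{p,ψ^p,z}(M') → H_{p,ψ^p}(M')` has norm at most `c²`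
      (∀ a : N' → ℂ, MemFibLp r (fun y => ψ y ^ p.toReal) p z a →
        MemCovHp (Fin n → ℂ) r (fun y => ψ y ^ p.toReal) p M (Tt a) ∧
        covHpNorm r (fun y => ψ y ^ p.toReal) p M (Tt a) ≤
          c ^ 2 * fibLpNorm r (fun y => ψ y ^ p.toReal) p z a ∧
        ∀ x ∈ r ⁻¹' {z}, Tt a x = a x) ∧
      -- consequently, any such operator `T̃_{ψ^{1/p},z}` built from the weight
      -- `ψ^{1/p}` is a bounded linear interpolation operator in
      -- `B(l_{p,ψ,z}(M'), H_{p,ψ}(M'))`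
      (∀ Tt' : (N' → ℂ) → (N' → ℂ),
        (∀ h₁ h₂ : N' → ℂ, Tt' (h₁ + h₂) = Tt' h₁ + Tt' h₂) →
        (∀ (a : ℂ) (h : N' → ℂ), Tt' (a • h) = a • Tt' h) →
        (∀ a : N' → ℂ, MemFibLp r (fun y => ψ y ^ (1 / p.toReal)) 1 z a →
          MemCovHp (Fin n → ℂ) r (fun y => ψ y ^ (1 / p.toReal)) 1 M (Tt' a) ∧
          covHpNorm r (fun y => ψ y ^ (1 / p.toReal)) 1 M (Tt' a) ≤
            c ^ 2 * fibLpNorm r (fun y => ψ y ^ (1 / p.toReal)) 1 z a ∧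
          ∀ x ∈ r ⁻¹' {z}, Tt' a x = a x) →
        (∀ a : N' → ℂ, MemFibLp r (fun y => ψ y ^ (1 / p.toReal)) ∞ z a →
          MemCovHp (Fin n → ℂ) r (fun y => ψ y ^ (1 / p.toReal)) ∞ M (Tt' a) ∧
          covHpNorm r (fun y => ψ y ^ (1 / p.toReal)) ∞ M (Tt' a) ≤
            c ^ 2 * fibLpNorm r (fun y => ψ y ^ (1 / p.toReal)) ∞ z a ∧
          ∀ x ∈ r ⁻¹' {z}, Tt' a x = a x) →
        ∀ a : N' → ℂ, MemFibLp r ψ p z a →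
          MemCovHp (Fin n → ℂ) r ψ p M (Tt' a) ∧
          covHpNorm r ψ p M (Tt' a) ≤ c ^ 2 * fibLpNorm r ψ p z a ∧
          ∀ x ∈ r ⁻¹' {z}, Tt' a x = a x) :=
  riesz_interpolation_step_general n r M ψ hψpos z c Tt hTtadd hTtsmul hTt1 hTtinf
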